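/- Let M, Y be finite-valued and R^M, R^Y ∈ {0,1} with (R^Y, R^M) ⊥ Y | M and R^Y ⊥ M | R^M, and P(R^M=1, R^Y=1 | M=m) > 0 for all m. Then P(Y=y | M=m) = P(Y=y | M=m, R^M=1, R^Y=1) for all m,y with P(M=m, R^M=1, R^Y=1) > 0, and additionally P(M=m, Y=y, R^M=0, R^Y=1) = [P(R^Y=1|R^M=0) / P(R^Y=1|R^M=1)] · P(M=m, Y=y, R^M=1, R^Y=1) · ζ(m) where ζ(m) = P(R^M=0|M=m)/P(R^M=1|M=m), assuming P(R^M=r) > 0 for r ∈ {0,1}. -/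
import Mathlib


open Finset
open scoped Classical

/-- The probability of the event `A` under the probability mass function `p`. -/
noncomputable def pr {Ω : Type*} [Fintype Ω] (p : Ω → ℝ) (A : Ω → Prop) : ℝ :=
  ∑ ω, if A ω then p ω else 0

lemma pr_congr {Ω : Type*} [Fintype Ω] (p : Ω → ℝ) {A B : Ω → Prop}
    (h : ∀ ω, A ω ↔ B ω) : pr p A = pr p B := by
  unfold pr
  refine Finset.sum_congr rfl fun ω _ => ?_
  exact if_congr (h ω) rfl rfl

lemma pr_mono {Ω : Type*} [Fintype Ω] (p : Ω → ℝ) (hp0 : ∀ ω, 0 ≤ p ω)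
    {A B : Ω → Prop} (h : ∀ ω, A ω → B ω) : pr p A ≤ pr p B := by
  unfold pr
  refine Finset.sum_le_sum fun ω _ => ?_
  by_cases hA : A ω
  · simp [hA, h ω hA]
  · simp only [hA, if_false]
    split
    · exact hp0 ω
    · exact le_refl 0

lemma key_alg (A B x v u0 u1 a0 a1 c0 c1 q0 q1 : ℝ)
    (hA : 0 < A) (ha0 : 0 < a0) (ha1 : 0 < a1) (hq1 : 0 < q1) (hc1 : 0 < c1)
    (e1 : A * x = B * u0) (e2 : A * v = B * u1)
    (e3 : a0 * u0 = c0 * q0) (e4 : a1 * u1 = c1 * q1) :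
    x = ((q0 / a0) / (q1 / a1)) * v * (c0 / c1) := by
  have h1 : x * u1 = v * u0 := by
    have h : A * (x * u1) = A * (v * u0) := by linear_combination u1 * e1 - u0 * e2
    exact mul_left_cancel₀ hA.ne' h
  field_simp
  linear_combination -x * a0 * e4 + a0 * a1 * h1 + a1 * v * e3

/-- Key identities for Theorem 2(i): with `(R^Y, R^M) ⊥ Y | M` and
`R^Y ⊥ M | R^M`, positivity `P(R^M=1, R^Y=1 | M=m) > 0` and `P(R^M=r) > 0`,
we have `P(Y=y | M=m) = P(Y=y | M=m, R^M=1, R^Y=1)` whenever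
`P(M=m, R^M=1, R^Y=1) > 0`, and the factorization
`P(M=m, Y=y, R^M=0, R^Y=1) = [P(R^Y=1|R^M=0)/P(R^Y=1|R^M=1)] ·
  P(M=m, Y=y, R^M=1, R^Y=1) · ζ(m)`
with `ζ(m) = P(R^M=0|M=m)/P(R^M=1|M=m)`. -/
theorem complete_case_and_factorization
    {Ω 𝓜 𝓨 : Type*} [Fintype Ω] [Fintype 𝓜] [Fintype 𝓨]
    (p : Ω → ℝ) (hp0 : ∀ ω, 0 ≤ p ω) (hp1 : ∑ ω, p ω = 1)
    (M : Ω → 𝓜) (Y : Ω → 𝓨) (RM RY : Ω → Bool)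
    -- conditional independence  (R^Y, R^M) ⊥ Y | M
    (hCI1 : ∀ m y r s,
      pr p (fun ω => M ω = m) *
          pr p (fun ω => M ω = m ∧ Y ω = y ∧ RM ω = r ∧ RY ω = s) =
        pr p (fun ω => M ω = m ∧ Y ω = y) *
          pr p (fun ω => M ω = m ∧ RM ω = r ∧ RY ω = s))
    -- conditional independence  R^Y ⊥ M | R^M
    (hCI2 : ∀ m r s,
      pr p (fun ω => RM ω = r) * pr p (fun ω => RM ω = r ∧ RY ω = s ∧ M ω = m) =
        pr p (fun ω => RM ω = r ∧ M ω = m) * pr p (fun ω => RM ω = r ∧ RY ω = s))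
    -- positivity
    (hpos : ∀ m, 0 < pr p (fun ω => M ω = m ∧ RM ω = true ∧ RY ω = true))
    (hposR : ∀ r, 0 < pr p (fun ω => RM ω = r)) :
    -- complete-case identification of P(Y | M)
    (∀ m y, 0 < pr p (fun ω => M ω = m ∧ RM ω = true ∧ RY ω = true) →
      pr p (fun ω => Y ω = y ∧ M ω = m) / pr p (fun ω => M ω = m) =
        pr p (fun ω => Y ω = y ∧ M ω = m ∧ RM ω = true ∧ RY ω = true) /
          pr p (fun ω => M ω = m ∧ RM ω = true ∧ RY ω = true)) ∧
    -- the factorization identity behind the linear system of Theorem 2(i)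
    (∀ m y,
      pr p (fun ω => M ω = m ∧ Y ω = y ∧ RM ω = false ∧ RY ω = true) =
        ((pr p (fun ω => RY ω = true ∧ RM ω = false) /
            pr p (fun ω => RM ω = false)) /
          (pr p (fun ω => RY ω = true ∧ RM ω = true) /
            pr p (fun ω => RM ω = true))) *
        pr p (fun ω => M ω = m ∧ Y ω = y ∧ RM ω = true ∧ RY ω = true) *
        (pr p (fun ω => RM ω = false ∧ M ω = m) /
          pr p (fun ω => RM ω = true ∧ M ω = m))) := by
  have hM : ∀ m, 0 < pr p (fun ω => M ω = m) := fun m =>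
    lt_of_lt_of_le (hpos m) (pr_mono p hp0 fun ω h => h.1)
  constructor
  · intro m y h
    have e := hCI1 m y true true
    -- reorder predicates to match the goal
    have r1 : pr p (fun ω => M ω = m ∧ Y ω = y) = pr p (fun ω => Y ω = y ∧ M ω = m) :=
      pr_congr p (fun ω => by tauto)
    have r2 : pr p (fun ω => M ω = m ∧ Y ω = y ∧ RM ω = true ∧ RY ω = true) =
        pr p (fun ω => Y ω = y ∧ M ω = m ∧ RM ω = true ∧ RY ω = true) :=
      pr_congr p (fun ω => by tauto)
    rw [r1, r2] at e
    rw [div_eq_div_iff (hM m).ne' h.ne']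
    linear_combination -e
  · intro m y
    -- abbreviations
    have hc1 : 0 < pr p (fun ω => RM ω = true ∧ M ω = m) :=
      lt_of_lt_of_le (hpos m) (pr_mono p hp0 fun ω h => ⟨h.2.1, h.1⟩)
    have hq1 : 0 < pr p (fun ω => RY ω = true ∧ RM ω = true) :=
      lt_of_lt_of_le (hpos m) (pr_mono p hp0 fun ω h => ⟨h.2.2, h.2.1⟩)
    have e1 := hCI1 m y false true
    have e2 := hCI1 m y true true
    have e3 := hCI2 m false true
    have e4 := hCI2 m true true
    -- reorder predicates in e1..e4 so everything matches
    have r0 : pr p (fun ω => RM ω = false ∧ RY ω = true ∧ M ω = m) =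
        pr p (fun ω => M ω = m ∧ RM ω = false ∧ RY ω = true) :=
      pr_congr p (fun ω => by tauto)
    have r1 : pr p (fun ω => RM ω = true ∧ RY ω = true ∧ M ω = m) =
        pr p (fun ω => M ω = m ∧ RM ω = true ∧ RY ω = true) :=
      pr_congr p (fun ω => by tauto)
    have r2 : pr p (fun ω => RM ω = false ∧ RY ω = true) =
        pr p (fun ω => RY ω = true ∧ RM ω = false) :=
      pr_congr p (fun ω => by tauto)
    have r3 : pr p (fun ω => RM ω = true ∧ RY ω = true) =
        pr p (fun ω => RY ω = true ∧ RM ω = true) :=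
      pr_congr p (fun ω => by tauto)
    rw [r0, r2] at e3
    rw [r1, r3] at e4
    exact key_alg (pr p (fun ω => M ω = m)) (pr p (fun ω => M ω = m ∧ Y ω = y)) _ _
      (pr p (fun ω => M ω = m ∧ RM ω = false ∧ RY ω = true))
      (pr p (fun ω => M ω = m ∧ RM ω = true ∧ RY ω = true)) _ _ _ _ _ _
      (hM m) (hposR false) (hposR true) hq1 hc1 e1 e2 e3 e4
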